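/- arXiv:2002.08719 — 8 statements merged into one kernel-verified Lean document; each statement's English description precedes it below -/
import Mathlib

section
/- Suppose either r > 1/2 and D, b > 0, or r = 1/2 and b > D > 0. Then there exist constants K₁, K₂ > 0 such that for all real numbers x, y with 0 < x ≤ y one has (D·x·y² + b·(1+x)^{2r}·y²)/(1+y²) − 2b·(1+x)^{2r}·y⁴/(1+y²)² + K₂·D·(1+x)^{2r}·y⁴/((1+y²)²·(1+log(1+y²))) ≤ K₁. -/
/-!
Write `A = (1 + x)^(2r)` and `P = 1 + y²`. The logarithmic term is at most `K₂ D A y⁴ / P²`, so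
everything reduces to an estimate of `D x` by `δ A + M` with `δ < b`: for `r > 1/2` the power
`(1 + x)^(2r)` outgrows `x`, so `δ = b/2` works, and for `r = 1/2` one takes `δ = D` and uses
`D < b`. Choosing `K₂ D = (b - δ)/2`, the expression is then bounded by
`M + A y² ((δ + b) - (b - δ)/2 · y²) / P²`, which is nonpositive apart from `M` once `y²` is large,
while for bounded `y` also `x ≤ y` and hence `A` is bounded.
-/

open Real

lemma exists_le_mul_one_add_rpow_add {p ε : ℝ} (hp : 1 < p) (hε : 0 < ε) :
    ∃ M, 0 ≤ M ∧ ∀ x : ℝ, 0 ≤ x → x ≤ ε * (1 + x) ^ p + M := by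
  set t := (1 / ε) ^ (1 / (p - 1))
  have hp1 : 0 < p - 1 := by linarith
  refine ⟨t, by positivity, fun x hx => ?_⟩
  have hx1 : 0 < 1 + x := by linarith
  rcases lt_or_ge (1 + x) t with hxt | htx
  · have : 0 ≤ ε * (1 + x) ^ p := by positivity
    linarith
  · have ht : 1 / ε ≤ (1 + x) ^ (p - 1) := by
      calc 1 / ε = t ^ (p - 1) := by
            rw [← rpow_mul (by positivity), one_div_mul_cancel hp1.ne', rpow_one]
        _ ≤ (1 + x) ^ (p - 1) := by gcongr
    have hsplit : (1 + x) ^ p = (1 + x) ^ (p - 1) * (1 + x) := by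
      rw [← rpow_add_one hx1.ne', sub_add_cancel]
    have : 1 + x ≤ ε * (1 + x) ^ p := by
      rw [hsplit, ← mul_assoc]
      refine le_mul_of_one_le_left hx1.le ?_
      rwa [div_le_iff₀' hε] at ht
    linarith [show 0 ≤ t by positivity]

lemma div_mul_one_add_log_le {a q t : ℝ} (ha : 0 ≤ a) (hq : 0 < q) (ht : 1 ≤ t) :
    a / (q * (1 + log t)) ≤ a / q := by
  apply div_le_div_of_nonneg_left ha hq
  nlinarith [log_nonneg ht]

lemma key_expr_le {D b c δ M A x y : ℝ} (hDx : D * x ≤ δ * A + M) (hA : 0 ≤ A) (hM : 0 ≤ M)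
    (hc : 0 ≤ c) :
    (D * x * y ^ 2 + b * A * y ^ 2) / (1 + y ^ 2) - 2 * b * A * y ^ 4 / (1 + y ^ 2) ^ 2
        + c * A * y ^ 4 / ((1 + y ^ 2) ^ 2 * (1 + log (1 + y ^ 2)))
      ≤ M + A * y ^ 2 * ((δ + b) - (b - c - δ) * y ^ 2) / (1 + y ^ 2) ^ 2 := by
  have hP : 0 < 1 + y ^ 2 := by positivity
  have hlog : c * A * y ^ 4 / ((1 + y ^ 2) ^ 2 * (1 + log (1 + y ^ 2)))
      ≤ c * A * y ^ 4 / (1 + y ^ 2) ^ 2 :=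
    div_mul_one_add_log_le (by positivity) (by positivity) (by nlinarith)
  have hlin : D * x * y ^ 2 / (1 + y ^ 2) ≤ δ * A * y ^ 2 / (1 + y ^ 2) + M := by
    have : M * y ^ 2 / (1 + y ^ 2) ≤ M := by
      rw [div_le_iff₀ hP]; nlinarith [sq_nonneg y]
    calc D * x * y ^ 2 / (1 + y ^ 2) ≤ (δ * A + M) * y ^ 2 / (1 + y ^ 2) := by gcongr
      _ = δ * A * y ^ 2 / (1 + y ^ 2) + M * y ^ 2 / (1 + y ^ 2) := by ring
      _ ≤ _ := by linarith
  have hsum : δ * A * y ^ 2 / (1 + y ^ 2) + M + b * A * y ^ 2 / (1 + y ^ 2)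
        - 2 * b * A * y ^ 4 / (1 + y ^ 2) ^ 2 + c * A * y ^ 4 / (1 + y ^ 2) ^ 2
      = M + A * y ^ 2 * ((δ + b) - (b - c - δ) * y ^ 2) / (1 + y ^ 2) ^ 2 := by
    field_simp
    ring
  rw [add_div]
  linarith

lemma mul_sub_div_one_add_sq_le {A A₀ β γ s : ℝ} (hA : 0 ≤ A) (hA₀ : 0 ≤ A₀) (hβ : 0 ≤ β)
    (hγ : 0 < γ) (hs : 0 ≤ s) (hsmall : s < β / γ → A ≤ A₀) :
    A * s * (β - γ * s) / (1 + s) ^ 2 ≤ β * A₀ := by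
  have hP : 0 < (1 + s) ^ 2 := by positivity
  rw [div_le_iff₀ hP]
  rcases lt_or_ge s (β / γ) with hlt | hge
  · have hs2 : s ≤ (1 + s) ^ 2 := by nlinarith
    calc A * s * (β - γ * s) ≤ β * (A * s) := by
          nlinarith [mul_nonneg (mul_nonneg hA hs) (mul_nonneg hγ.le hs)]
      _ ≤ β * (A₀ * (1 + s) ^ 2) := by gcongr; exact hsmall hlt
      _ = _ := by ring
  · have : β ≤ γ * s := by rwa [div_le_iff₀' hγ] at hge
    nlinarith [mul_nonneg hA hs, mul_nonneg (mul_nonneg hβ hA₀) hP.le]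

theorem exists_key_bound_of_le_rpow {r D b δ M : ℝ} (hr : 0 ≤ r) (hD : 0 < D) (hδ : 0 ≤ δ)
    (hδb : δ < b) (hM : 0 ≤ M) (hDx : ∀ x : ℝ, 0 < x → D * x ≤ δ * (1 + x) ^ (2 * r) + M) :
    ∃ K₁ K₂ : ℝ, 0 < K₁ ∧ 0 < K₂ ∧
      ∀ x y : ℝ, 0 < x → x ≤ y →
        (D * x * y ^ 2 + b * (1 + x) ^ (2 * r) * y ^ 2) / (1 + y ^ 2)
          - 2 * b * (1 + x) ^ (2 * r) * y ^ 4 / (1 + y ^ 2) ^ 2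
          + K₂ * D * (1 + x) ^ (2 * r) * y ^ 4
              / ((1 + y ^ 2) ^ 2 * (1 + log (1 + y ^ 2))) ≤ K₁ := by
  set A₀ := (1 + √((δ + b) / ((b - δ) / 2))) ^ (2 * r)
  have hb : 0 < b := by linarith
  have hbδ : 0 < (b - δ) / 2 := half_pos (sub_pos.2 hδb)
  refine ⟨M + (δ + b) * A₀, (b - δ) / (2 * D), by positivity,
    div_pos (sub_pos.2 hδb) (by positivity), fun x y hx hxy => ?_⟩
  have hK₂ : (b - δ) / (2 * D) * D = (b - δ) / 2 := by field_simp
  have hA : 0 ≤ (1 + x) ^ (2 * r) := by positivity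
  have hsmall : y ^ 2 < (δ + b) / ((b - δ) / 2) → (1 + x) ^ (2 * r) ≤ A₀ := fun hy => by
    have : x < √((δ + b) / ((b - δ) / 2)) := lt_sqrt_of_sq_lt (by nlinarith)
    exact rpow_le_rpow (by positivity) (by linarith) (by positivity)
  calc _ ≤ M + (1 + x) ^ (2 * r) * y ^ 2 * ((δ + b) - (b - (b - δ) / (2 * D) * D - δ) * y ^ 2)
          / (1 + y ^ 2) ^ 2 := key_expr_le (hDx x hx) hA hM (by positivity)
    _ = M + (1 + x) ^ (2 * r) * y ^ 2 * ((δ + b) - (b - δ) / 2 * y ^ 2) / (1 + y ^ 2) ^ 2 := by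
        rw [hK₂]; ring
    _ ≤ M + (δ + b) * A₀ :=
        add_le_add le_rfl (mul_sub_div_one_add_sq_le hA (by positivity) (by positivity)
          hbδ (sq_nonneg y) hsmall)

/-- Lemma 7.1: the key elementary inequality behind the result that strong
multiplicative noise prevents blow-up for the stochastic Euler–Poincaré equations. -/
theorem noise_prevents_blowup_key_inequality
    (r D b : ℝ)
    (h : (1/2 < r ∧ 0 < D ∧ 0 < b) ∨ (r = 1/2 ∧ D < b ∧ 0 < D)) :
    ∃ K₁ K₂ : ℝ, 0 < K₁ ∧ 0 < K₂ ∧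
      ∀ x y : ℝ, 0 < x → x ≤ y →
        (D * x * y ^ 2 + b * (1 + x) ^ (2 * r) * y ^ 2) / (1 + y ^ 2)
          - 2 * b * (1 + x) ^ (2 * r) * y ^ 4 / (1 + y ^ 2) ^ 2
          + K₂ * D * (1 + x) ^ (2 * r) * y ^ 4
              / ((1 + y ^ 2) ^ 2 * (1 + Real.log (1 + y ^ 2))) ≤ K₁ := by
  rcases h with ⟨hr, hD, hb⟩ | ⟨rfl, hDb, hD⟩
  · obtain ⟨M, hM, hxM⟩ :=
      exists_le_mul_one_add_rpow_add (p := 2 * r) (ε := b / (2 * D)) (by linarith) (by positivity)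
    refine exists_key_bound_of_le_rpow (δ := b / 2) (M := D * M) (by linarith) hD (by positivity)
      (by linarith) (by positivity) fun x hx => ?_
    calc D * x ≤ D * (b / (2 * D) * (1 + x) ^ (2 * r) + M) := by gcongr; exact hxM x hx.le
      _ = b / 2 * (1 + x) ^ (2 * r) + D * M := by field_simp
  · refine exists_key_bound_of_le_rpow (δ := D) (M := 0) (by norm_num) hD hD.le hDb le_rfl
      fun x _ => ?_
    rw [show 2 * (1 / 2 : ℝ) = 1 by norm_num, rpow_one]
    linarith
end

section
/- Let v : ℝ → ℝ be continuously differentiable and 2π-periodic. Then for every x ∈ [0,2π], ∫₀^{2π} G_𝕋(x−y) ( v(y)² + ½ v'(y)² ) dy ≥ ½ v(x)². -/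
/-!
Write `W = v² + ½ v'²`. On `[0, x]` the kernel is `G_𝕋(x - y) = cosh(y - x + π) / (2 sinh π)`
and on `[x, 2π]` it is `cosh(y - x - π) / (2 sinh π)`. For any shift `c`, the derivative of
`sinh(y - c) v²/2` is `cosh(y - c) v²/2 + sinh(y - c) v v'`, which is bounded by `cosh(y - c) W`
because `cosh² - sinh² = 1`. Integrating over both pieces, the boundary terms at `0` and `2π`
cancel by periodicity and the two terms at `x` add up to `sinh π · v(x)²`.
-/

open MeasureTheory Set Real

noncomputable section

/-- The Green's function of `1 - ∂ₓ²` on the circle of length `2π`: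
`G_𝕋(z) = cosh(z - 2π⌊z/(2π)⌋ - π) / (2 sinh π)`. -/
def GT (z : ℝ) : ℝ :=
  Real.cosh (z - 2 * Real.pi * (⌊z / (2 * Real.pi)⌋ : ℝ) - Real.pi)
    / (2 * Real.sinh Real.pi)

lemma GT_eq_of_mem_Icc {z : ℝ} (k : ℤ) (h₁ : 2 * π * k ≤ z) (h₂ : z ≤ 2 * π * (k + 1)) :
    GT z = cosh (z - 2 * π * k - π) / (2 * sinh π) := by
  unfold GT
  rcases h₂.lt_or_eq with h₂ | rfl
  · have hfloor : ⌊z / (2 * π)⌋ = k := by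
      rw [Int.floor_eq_iff, le_div_iff₀ (by positivity), div_lt_iff₀ (by positivity)]
      constructor <;> linarith
    rw [hfloor]
  · have hfloor : ⌊2 * π * (k + 1) / (2 * π)⌋ = k + 1 := by
      rw [mul_div_cancel_left₀ _ (by positivity)]
      exact_mod_cast Int.floor_intCast (k + 1)
    rw [hfloor, ← cosh_neg]
    push_cast
    ring_nf

lemma continuous_GT : Continuous GT := by
  have hfract : GT = (fun t => cosh (2 * π * t - π) / (2 * sinh π)) ∘ Int.fract ∘
      (fun z => z / (2 * π)) := by
    ext z
    simp only [GT, Function.comp_apply, Int.fract, mul_sub, mul_div_cancel₀ z two_pi_pos.ne']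
  rw [hfract]
  refine (ContinuousOn.comp_fract'' (f := fun t => cosh (2 * π * t - π) / (2 * sinh π))
    ((continuous_cosh.comp (by fun_prop)).div_const _).continuousOn ?_).comp
    (continuous_id.div_const _)
  simp only [mul_zero, zero_sub, cosh_neg, mul_one, two_mul, add_sub_cancel_right]

lemma cosh_mul_sq_add_sinh_mul_le (t a b : ℝ) :
    cosh t * a ^ 2 / 2 + sinh t * (a * b) ≤ cosh t * (a ^ 2 + 1 / 2 * b ^ 2) := by
  have hsq : cosh t * (2 * (cosh t * (a ^ 2 + 1 / 2 * b ^ 2) -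
      (cosh t * a ^ 2 / 2 + sinh t * (a * b)))) = (cosh t * a - sinh t * b) ^ 2 + b ^ 2 := by
    linear_combination b ^ 2 * cosh_sq t
  nlinarith [cosh_pos t, sq_nonneg (cosh t * a - sinh t * b), sq_nonneg b]

lemma sinh_mul_sq_sub_le_integral_cosh_mul {v : ℝ → ℝ} (hv : ContDiff ℝ 1 v) {a b : ℝ}
    (hab : a ≤ b) (c : ℝ) :
    sinh (b - c) * v b ^ 2 / 2 - sinh (a - c) * v a ^ 2 / 2
      ≤ ∫ y in a..b, cosh (y - c) * (v y ^ 2 + 1 / 2 * deriv v y ^ 2) := by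
  have hdiff : Differentiable ℝ v := hv.differentiable one_ne_zero
  have hderiv : Continuous (deriv v) := hv.continuous_deriv le_rfl
  have hasDeriv (y : ℝ) : HasDerivAt (fun t => sinh (t - c) * v t ^ 2 / 2)
      (cosh (y - c) * v y ^ 2 / 2 + sinh (y - c) * (v y * deriv v y)) y := by
    refine ((((hasDerivAt_id y).sub_const c).sinh).mul
      ((hdiff y).hasDerivAt.pow 2)).div_const 2 |>.congr_deriv ?_
    simp only [id, Nat.cast_ofNat, Pi.pow_apply]
    ring
  refine intervalIntegral.sub_le_integral_of_hasDeriv_right_of_le hab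
    (continuous_iff_continuousAt.2 fun y => (hasDeriv y).continuousAt).continuousOn
    (fun y _ => (hasDeriv y).hasDerivWithinAt) (Continuous.integrableOn_Icc (by fun_prop))
    fun y _ => cosh_mul_sq_add_sinh_mul_le _ _ _

lemma integral_GT_sub_mul {x a b c : ℝ} (k : ℤ) (hab : a ≤ b) (h₁ : 2 * π * k ≤ x - b)
    (h₂ : x - a ≤ 2 * π * (k + 1)) (hc : c = x - 2 * π * k - π) (f : ℝ → ℝ) :
    ∫ y in a..b, GT (x - y) * f y = (∫ y in a..b, cosh (y - c) * f y) / (2 * sinh π) := by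
  rw [← intervalIntegral.integral_div]
  refine intervalIntegral.integral_congr fun y hy => ?_
  rw [uIcc_of_le hab] at hy
  rw [GT_eq_of_mem_Icc k (by linarith [hy.2]) (by linarith [hy.1]), hc, ← cosh_neg]
  ring_nf

/-- The key convolution lower bound `G_𝕋 * (v² + ½ v_x²) ≥ ½ v²` for `C¹`,
`2π`-periodic functions `v`. -/
theorem green_convolution_lower_bound
    (v : ℝ → ℝ) (hv : ContDiff ℝ 1 v) (hper : ∀ x, v (x + 2 * Real.pi) = v x)
    (x : ℝ) (hx : x ∈ Set.Icc (0 : ℝ) (2 * Real.pi)) :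
    (1 / 2) * (v x) ^ 2
      ≤ ∫ y in (0 : ℝ)..(2 * Real.pi),
          GT (x - y) * ((v y) ^ 2 + (1 / 2) * (deriv v y) ^ 2) := by
  obtain ⟨hx₀, hx₂π⟩ := hx
  have h₁ := sinh_mul_sq_sub_le_integral_cosh_mul hv hx₀ (x - π)
  have h₂ := sinh_mul_sq_sub_le_integral_cosh_mul hv hx₂π (x + π)
  rw [sub_sub_cancel, zero_sub, neg_sub] at h₁
  rw [show 2 * π - (x + π) = π - x by ring, sub_add_cancel_left, sinh_neg,
    show v (2 * π) = v 0 by simpa using hper 0] at h₂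
  have hint (a b : ℝ) : IntervalIntegrable
      (fun y => GT (x - y) * (v y ^ 2 + 1 / 2 * deriv v y ^ 2)) volume a b := by
    have := hv.continuous
    have := hv.continuous_deriv le_rfl
    exact (continuous_GT.comp (by fun_prop)).mul (by fun_prop) |>.intervalIntegrable a b
  rw [← intervalIntegral.integral_add_adjacent_intervals (hint 0 x) (hint x (2 * π)),
    integral_GT_sub_mul (c := x - π) 0 hx₀ (by simp) (by simpa) (by simp),
    integral_GT_sub_mul (c := x + π) (-1) hx₂π (by simpa) (by simp) (by push_cast; ring),
    ← add_div, le_div_iff₀ (by positivity)]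
  linarith

end
end

section
/- Let v : [0,2π] → ℝ be continuously differentiable. Then for every x ∈ [0,2π]: (i) ∫₀^x e^{−y} ( v(y)² + ½ v'(y)² ) dy ≥ −½ e^{−x} v(x)² + ½ v(0)², and (ii) ∫₀^x e^{y} ( v(y)² + ½ v'(y)² ) dy ≥ ½ e^{x} v(x)² − ½ v(0)². -/
/-! The derivative of `½ e^{σy} v²` is `e^{σy} (σ/2 · v² + v v')`, and for `|σ| ≤ 1` the bracket is
bounded in absolute value by `v² + ½ v'²` (since `|v v'| ≤ ½ v² + ½ v'²`). Integrating over `[a, b]`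
bounds `|½ e^{σb} v(b)² − ½ e^{σa} v(a)²|` by the weighted energy; the two inequalities are the two
halves of this absolute-value bound for `σ = -1` and `σ = 1`. -/

lemma abs_half_mul_sq_add_mul_le {σ : ℝ} (hσ : |σ| ≤ 1) (a b : ℝ) :
    |σ / 2 * a ^ 2 + a * b| ≤ a ^ 2 + 1 / 2 * b ^ 2 := by
  obtain ⟨hσl, hσu⟩ := abs_le.mp hσ
  have ha := sq_nonneg a
  rw [abs_le]
  constructor <;> nlinarith [sq_nonneg (a + b), sq_nonneg (a - b), mul_le_mul_of_nonneg_right hσu ha,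
    mul_le_mul_of_nonneg_right hσl ha]

lemma hasDerivAt_half_exp_mul_sq {v : ℝ → ℝ} {v' : ℝ} (σ : ℝ) {y : ℝ} (hv : HasDerivAt v v' y) :
    HasDerivAt (fun y => 1 / 2 * Real.exp (σ * y) * v y ^ 2)
      (Real.exp (σ * y) * (σ / 2 * v y ^ 2 + v y * v')) y := by
  have hexp : HasDerivAt (fun y => Real.exp (σ * y)) (Real.exp (σ * y) * σ) y := by
    simpa using ((hasDerivAt_id y).const_mul σ).exp
  exact ((hexp.const_mul (1 / 2)).mul (hv.pow 2)).congr_deriv (by simp; ring)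

theorem abs_sub_half_exp_mul_sq_le_integral {v : ℝ → ℝ} (hv : ContDiff ℝ 1 v) {σ : ℝ}
    (hσ : |σ| ≤ 1) {a b : ℝ} (hab : a ≤ b) :
    |1 / 2 * Real.exp (σ * b) * v b ^ 2 - 1 / 2 * Real.exp (σ * a) * v a ^ 2|
      ≤ ∫ y in a..b, Real.exp (σ * y) * (v y ^ 2 + 1 / 2 * deriv v y ^ 2) := by
  have hv' : Continuous (deriv v) := hv.continuous_deriv le_rfl
  have hv₀ : Continuous v := hv.continuous
  have hftc := intervalIntegral.integral_eq_sub_of_hasDerivAt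
    (fun y _ => hasDerivAt_half_exp_mul_sq σ (hv.differentiable one_ne_zero y).hasDerivAt)
    (Continuous.intervalIntegrable (by fun_prop) a b)
  rw [← hftc]
  refine (intervalIntegral.abs_integral_le_integral_abs hab).trans <|
    intervalIntegral.integral_mono_on hab (Continuous.intervalIntegrable (by fun_prop) a b)
      (Continuous.intervalIntegrable (by fun_prop) a b) fun y _ => ?_
  rw [abs_mul, abs_of_pos (Real.exp_pos _)]
  exact mul_le_mul_of_nonneg_left (abs_half_mul_sq_add_mul_le hσ _ _) (Real.exp_pos _).le

/-- Exponential-weight integral inequalities on `[0,x]` for `C¹` functions `v`: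
(i) `∫₀ˣ e^{-y}(v² + ½ v'²) dy ≥ -½ e^{-x} v(x)² + ½ v(0)²`, and
(ii) `∫₀ˣ e^{y}(v² + ½ v'²) dy ≥ ½ e^{x} v(x)² - ½ v(0)²`. -/
theorem exp_weight_integral_lower_bounds_left
    (v : ℝ → ℝ) (hv : ContDiff ℝ 1 v)
    (x : ℝ) (hx : x ∈ Set.Icc (0 : ℝ) (2 * Real.pi)) :
    (-(1 / 2) * Real.exp (-x) * (v x) ^ 2 + (1 / 2) * (v 0) ^ 2
        ≤ ∫ y in (0 : ℝ)..x,
            Real.exp (-y) * ((v y) ^ 2 + (1 / 2) * (deriv v y) ^ 2)) ∧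
    ((1 / 2) * Real.exp x * (v x) ^ 2 - (1 / 2) * (v 0) ^ 2
        ≤ ∫ y in (0 : ℝ)..x,
            Real.exp y * ((v y) ^ 2 + (1 / 2) * (deriv v y) ^ 2)) := by
  have hneg := abs_le.mp <| abs_sub_half_exp_mul_sq_le_integral hv (σ := -1) (by simp) hx.1
  have hpos := abs_le.mp <| abs_sub_half_exp_mul_sq_le_integral hv (σ := 1) (by simp) hx.1
  simp only [neg_one_mul, one_mul, mul_zero, Real.exp_zero, mul_one] at hneg hpos
  constructor
  · linarith [hneg.1]
  · exact hpos.2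
end

section
/- Let T* ∈ (0,∞], N > 0, let β : [0,T*) → (0,∞) be continuous, and let M : [0,T*) → ℝ be locally Lipschitz with M'(t) + (β(t)/2) M(t)² ≤ β(t) N for almost every t ∈ (0,T*). If 0 < ε < 1/2 and M(t₀) < −√(N/ε) for some t₀ ∈ [0,T*), then M(t) ≤ −√(N/ε) for all t ∈ [t₀,T*). -/
/-!
Write `c = √(N/ε)`. As `ε < 1/2`, the threshold `-√(2N)` lies strictly above `-c`, and wherever
`M < -√(2N)` we have `M² > 2N`, hence `M' ≤ β (N - M²/2) < 0`. By continuity, just after a time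
where `M ≤ -c` the function is still below `-√(2N)`, so it is nonincreasing there (FTC for
absolutely continuous functions) and remains `≤ -c`. A continuity induction on `[t₀, t]`
finishes the proof.
-/

open MeasureTheory Set Filter Topology

theorem AbsolutelyContinuousOnInterval.le_of_ae_deriv_nonpos {f : ℝ → ℝ} {a b : ℝ}
    (hf : AbsolutelyContinuousOnInterval f a b) (hab : a ≤ b)
    (hd : ∀ᵐ x, x ∈ Ioo a b → deriv f x ≤ 0) : f b ≤ f a := by
  have hd' : 0 ≤ᵐ[volume.restrict (Icc a b)] fun x ↦ -deriv f x := by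
    rw [EventuallyLE, ← Measure.restrict_congr_set Ioo_ae_eq_Icc,
      ae_restrict_iff' measurableSet_Ioo]
    filter_upwards [hd] with x hx hxab using neg_nonneg.mpr (hx hxab)
  have := intervalIntegral.integral_nonneg_of_ae_restrict hab hd'
  rw [intervalIntegral.integral_neg, hf.integral_deriv_eq_sub] at this
  linarith

theorem AbsolutelyContinuousOnInterval.forall_le_of_ae_deriv_nonpos_of_lt {f : ℝ → ℝ}
    {a b c θ : ℝ} (hf : AbsolutelyContinuousOnInterval f a b) (hcθ : c < θ) (ha : f a ≤ c)
    (hd : ∀ᵐ x, x ∈ Ioo a b → f x < θ → deriv f x ≤ 0) : ∀ x ∈ Icc a b, f x ≤ c := by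
  have hcont : ContinuousOn f (Icc a b) := hf.continuousOn.mono Icc_subset_uIcc
  have hclosed : IsClosed (f ⁻¹' Iic c ∩ Icc a b) :=
    inter_comm (Icc a b) _ ▸ hcont.preimage_isClosed_of_isClosed isClosed_Icc isClosed_Iic
  refine hclosed.Icc_subset_of_forall_mem_nhdsWithin ha fun x ⟨hxc, hxa, hxb⟩ ↦ ?_
  have hbelow : f ⁻¹' Iio θ ∩ Ico x b ∈ 𝓝[≥] x := by
    rw [← nhdsWithin_Ico_eq_nhdsGE hxb]
    refine inter_mem ?_ self_mem_nhdsWithin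
    exact hcont.mono (Ico_subset_Icc_self.trans (Icc_subset_Icc_left hxa)) x ⟨le_rfl, hxb⟩
      (Iio_mem_nhds (hxc.trans_lt hcθ))
  obtain ⟨u, hxu, hu⟩ := mem_nhdsGE_iff_exists_Ico_subset.mp hbelow
  refine mem_of_superset (Ioo_mem_nhdsGT hxu) fun z hz ↦ ?_
  have hzb : z < b := (hu ⟨hz.1.le, hz.2⟩).2.2
  have hfz : f z ≤ f x := by
    refine (hf.mono (uIcc_subset_uIcc ?_ ?_)).le_of_ae_deriv_nonpos hz.1.le ?_
    · exact Icc_subset_uIcc ⟨hxa, hxb.le⟩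
    · exact Icc_subset_uIcc ⟨hxa.trans hz.1.le, hzb.le⟩
    · filter_upwards [hd] with y hy hyxz
      have hyu : y ∈ Ico x u := ⟨hyxz.1.le, hyxz.2.trans hz.2⟩
      exact hy ⟨hxa.trans_lt hyxz.1, hyxz.2.trans hzb⟩ (hu hyu).1
  exact hfz.trans hxc

theorem nonpos_of_add_half_mul_sq_le {d m β N : ℝ} (hβ : 0 < β) (hm : m < -√(2 * N))
    (h : d + β / 2 * m ^ 2 ≤ β * N) : d ≤ 0 := by
  have hm2 : 2 * N < m ^ 2 := by
    rw [← neg_sq]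
    exact (Real.sqrt_lt' (by linarith [Real.sqrt_nonneg (2 * N)])).mp (lt_neg_of_lt_neg hm)
  nlinarith

theorem riccati_forward_invariance_general
    (Tstar : EReal) (N : ℝ) (hN : 0 < N)
    (β M : ℝ → ℝ)
    (hβpos : ∀ t : ℝ, 0 ≤ t → (t : EReal) < Tstar → 0 < β t)
    (hMlip : ∀ a b : ℝ, 0 ≤ a → (b : EReal) < Tstar →
      ∃ L : NNReal, LipschitzOnWith L M (Set.Icc a b))
    (hineq : ∀ᵐ (t : ℝ) ∂volume, 0 < t → (t : EReal) < Tstar →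
      DifferentiableAt ℝ M t ∧ deriv M t + β t / 2 * (M t) ^ 2 ≤ β t * N)
    (ε : ℝ) (hε0 : 0 < ε) (hε : ε < 1 / 2)
    (t₀ : ℝ) (ht₀ : 0 ≤ t₀)
    (hM0 : M t₀ < -Real.sqrt (N / ε)) :
    ∀ t : ℝ, t₀ ≤ t → (t : EReal) < Tstar → M t ≤ -Real.sqrt (N / ε) := by
  intro t ht₀t htT
  obtain ⟨L, hL⟩ := hMlip t₀ t ht₀ htT
  have hgap : -√(N / ε) < -√(2 * N) := by
    refine neg_lt_neg (Real.sqrt_lt_sqrt (by positivity) ?_)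
    rw [lt_div_iff₀ hε0]
    nlinarith
  have hAC : AbsolutelyContinuousOnInterval M t₀ t :=
    (uIcc_of_le ht₀t ▸ hL).absolutelyContinuousOnInterval
  refine hAC.forall_le_of_ae_deriv_nonpos_of_lt hgap hM0.le ?_ t ⟨ht₀t, le_rfl⟩
  filter_upwards [hineq] with s hs hst hMs
  have hs0 : 0 < s := ht₀.trans_lt hst.1
  have hsT : (s : EReal) < Tstar := (EReal.coe_lt_coe_iff.mpr hst.2).trans htT
  exact nonpos_of_add_half_mul_sq_le (hβpos s hs0.le hsT) hMs (hs hs0 hsT).2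

/-- Forward invariance of `{M ≤ -√(N/ε)}` for the Riccati-type differential
inequality `M' + (β/2) M² ≤ β N` a.e. on `(0,T*)`, where `T* ∈ (0,∞]`,
`β : [0,T*) → (0,∞)` is continuous and `M : [0,T*) → ℝ` is locally Lipschitz. -/
theorem riccati_forward_invariance
    (Tstar : EReal) (hT : 0 < Tstar) (N : ℝ) (hN : 0 < N)
    (β M : ℝ → ℝ)
    (hβc : ContinuousOn β {t : ℝ | 0 ≤ t ∧ (t : EReal) < Tstar})
    (hβpos : ∀ t : ℝ, 0 ≤ t → (t : EReal) < Tstar → 0 < β t)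
    (hMlip : ∀ a b : ℝ, 0 ≤ a → (b : EReal) < Tstar →
      ∃ L : NNReal, LipschitzOnWith L M (Set.Icc a b))
    (hineq : ∀ᵐ (t : ℝ) ∂volume, 0 < t → (t : EReal) < Tstar →
      DifferentiableAt ℝ M t ∧ deriv M t + β t / 2 * (M t) ^ 2 ≤ β t * N)
    (ε : ℝ) (hε0 : 0 < ε) (hε : ε < 1 / 2)
    (t₀ : ℝ) (ht₀ : 0 ≤ t₀) (ht₀T : (t₀ : EReal) < Tstar)
    (hM0 : M t₀ < -Real.sqrt (N / ε)) :
    ∀ t : ℝ, t₀ ≤ t → (t : EReal) < Tstar → M t ≤ -Real.sqrt (N / ε) :=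
  riccati_forward_invariance_general Tstar N hN β M hβpos hMlip hineq ε hε0 hε t₀ ht₀ hM0
end

section
/- Let T* ∈ (0,∞], K > 0, let β : [0,T*) → (0,∞) be continuous, and let M : [0,T*) → ℝ be locally Lipschitz with M'(t) ≤ β(t) K − (β(t)/2) M(t)² for almost every t ∈ (0,T*). If M(0) < −√(2K), then M(t) ≤ −√(2K) for all t ∈ [0,T*). -/
/-!
Below the level `-√(2K)` the right-hand side `β K - (β/2) M²` is nonpositive, so `M` is
nonincreasing for as long as it stays below that level. Were `M` to reach it at a first time
`t₀ > 0`, the fundamental theorem of calculus for the absolutely continuous function `M` on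
`[0, t₀]` would give `M t₀ ≤ M 0 < -√(2K)`, a contradiction.
-/

open MeasureTheory Set

namespace AbsolutelyContinuousOnInterval

variable {f : ℝ → ℝ} {a b c : ℝ}

theorem le_of_ae_deriv_nonpos_s9 (hab : a ≤ b) (hf : AbsolutelyContinuousOnInterval f a b)
    (hd : ∀ᵐ x, x ∈ Ioo a b → deriv f x ≤ 0) : f b ≤ f a := by
  have hint : ∫ x in a..b, deriv f x ≤ 0 := by
    rw [intervalIntegral.integral_of_le hab, integral_Ioc_eq_integral_Ioo]
    exact setIntegral_nonpos_ae measurableSet_Ioo hd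
  linarith [hf.integral_deriv_eq_sub]

theorem lt_of_ae_deriv_nonpos_of_lt (hab : a ≤ b) (hf : AbsolutelyContinuousOnInterval f a b)
    (ha : f a < c) (hd : ∀ᵐ x, x ∈ Ioo a b → f x < c → deriv f x ≤ 0) : f b < c := by
  by_contra! hb
  set s := Icc a b ∩ f ⁻¹' Ici c
  have hf_cont : ContinuousOn f (Icc a b) := by simpa only [uIcc_of_le hab] using hf.continuousOn
  have hs_closed : IsClosed s := hf_cont.preimage_isClosed_of_isClosed isClosed_Icc isClosed_Ici
  have hs_bdd : BddBelow s := ⟨a, fun x hx => hx.1.1⟩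
  set t₀ := sInf s
  obtain ⟨⟨hat₀, ht₀b⟩, hct₀⟩ : t₀ ∈ s :=
    hs_closed.csInf_mem ⟨b, right_mem_Icc.2 hab, hb⟩ hs_bdd
  have hbelow : ∀ x ∈ Ioo a t₀, f x < c := fun x hx => by
    by_contra! hcx
    exact (csInf_le hs_bdd ⟨⟨hx.1.le, hx.2.le.trans ht₀b⟩, hcx⟩).not_gt hx.2
  have hdec : f t₀ ≤ f a := by
    refine le_of_ae_deriv_nonpos_s9 hat₀ (hf.mono ?_) ?_
    · rw [uIcc_of_le hat₀, uIcc_of_le hab]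
      exact Icc_subset_Icc_right ht₀b
    · filter_upwards [hd] with x hx hxt₀
      exact hx ⟨hxt₀.1, hxt₀.2.trans_le ht₀b⟩ (hbelow x hxt₀)
  exact absurd (hct₀.trans hdec) ha.not_ge

end AbsolutelyContinuousOnInterval

theorem riccati_rhs_nonpos {β K m : ℝ} (hβ : 0 ≤ β) (hm : m < -Real.sqrt (2 * K)) :
    β * K - β / 2 * m ^ 2 ≤ 0 := by
  have hm' : 2 * K < (-m) ^ 2 :=
    (Real.sqrt_lt' ((Real.sqrt_nonneg _).trans_lt (lt_neg.1 hm))).1 (lt_neg.1 hm)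
  nlinarith

theorem riccati_stays_below_general
    (Tstar : EReal) (K : ℝ)
    (β M : ℝ → ℝ)
    (hβpos : ∀ t : ℝ, 0 ≤ t → (t : EReal) < Tstar → 0 < β t)
    (hMlip : ∀ a b : ℝ, 0 ≤ a → (b : EReal) < Tstar →
      ∃ L : NNReal, LipschitzOnWith L M (Set.Icc a b))
    (hineq : ∀ᵐ (t : ℝ) ∂volume, 0 < t → (t : EReal) < Tstar →
      DifferentiableAt ℝ M t ∧ deriv M t ≤ β t * K - β t / 2 * (M t) ^ 2)
    (hM0 : M 0 < -Real.sqrt (2 * K)) :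
    ∀ t : ℝ, 0 ≤ t → (t : EReal) < Tstar → M t ≤ -Real.sqrt (2 * K) := by
  intro t ht htT
  obtain ⟨L, hL⟩ := hMlip 0 t le_rfl htT
  have hM_ac : AbsolutelyContinuousOnInterval M 0 t :=
    LipschitzOnWith.absolutelyContinuousOnInterval (by rwa [uIcc_of_le ht])
  refine (hM_ac.lt_of_ae_deriv_nonpos_of_lt ht hM0 ?_).le
  filter_upwards [hineq] with x hx hxt hMx
  have hxT : (x : EReal) < Tstar := (EReal.coe_lt_coe_iff.2 hxt.2).trans htT
  exact (hx hxt.1 hxT).2.trans (riccati_rhs_nonpos (hβpos x hxt.1.le hxT).le hMx)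

/-- Proposition 7.2 (deterministic core): if `M' ≤ β K - (β/2) M²` a.e. on
`(0,T*)` with `β : [0,T*) → (0,∞)` continuous, `M : [0,T*) → ℝ` locally
Lipschitz, `K > 0` and `M(0) < -√(2K)`, then `M(t) ≤ -√(2K)` on `[0,T*)`. -/
theorem riccati_stays_below
    (Tstar : EReal) (hT : 0 < Tstar) (K : ℝ) (hK : 0 < K)
    (β M : ℝ → ℝ)
    (hβc : ContinuousOn β {t : ℝ | 0 ≤ t ∧ (t : EReal) < Tstar})
    (hβpos : ∀ t : ℝ, 0 ≤ t → (t : EReal) < Tstar → 0 < β t)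
    (hMlip : ∀ a b : ℝ, 0 ≤ a → (b : EReal) < Tstar →
      ∃ L : NNReal, LipschitzOnWith L M (Set.Icc a b))
    (hineq : ∀ᵐ (t : ℝ) ∂volume, 0 < t → (t : EReal) < Tstar →
      DifferentiableAt ℝ M t ∧ deriv M t ≤ β t * K - β t / 2 * (M t) ^ 2)
    (hM0 : M 0 < -Real.sqrt (2 * K)) :
    ∀ t : ℝ, 0 ≤ t → (t : EReal) < Tstar → M t ≤ -Real.sqrt (2 * K) :=
  riccati_stays_below_general Tstar K β M hβpos hMlip hineq hM0
end

section
/- Let T* ∈ (0,∞], K > 0, let β : [0,T*) → (0,∞) be continuous, and let M : [0,T*) → ℝ be locally Lipschitz with M'(t) ≤ β(t) K − (β(t)/2) M(t)² for almost every t ∈ (0,T*) and M(0) < −√(2K). Then for all t ∈ [0,T*): 1/M(t) − 1/M(0) ≥ (1/2 − K/M(0)²) ∫₀ᵗ β(s) ds. -/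
/-!
While `M < -√(2K)` the right-hand side `β (K - M² / 2)` is negative, so `M` can never climb above
`M 0`: at the first time it reached a level between `M 0` and `-√(2K)` it would have been
nonincreasing since time `0`. Hence `M ≤ M 0 < 0` on `[0, t]`, so `1 / M` is Lipschitz there and
a.e. `(1 / M)' = -M' / M² ≥ β / 2 - β K / M² ≥ (1 / 2 - K / M(0)²) β`. Integrating, by the
fundamental theorem of calculus for absolutely continuous functions, gives the bound.
-/

open MeasureTheory Set
open scoped NNReal

namespace AbsolutelyContinuousOnInterval

variable {f φ : ℝ → ℝ} {a b : ℝ}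

theorem sub_le_integral_of_ae_deriv_le (hf : AbsolutelyContinuousOnInterval f a b) (hab : a ≤ b)
    (hφ : IntervalIntegrable φ volume a b) (hd : ∀ᵐ x, x ∈ Ioo a b → deriv f x ≤ φ x) :
    f b - f a ≤ ∫ x in a..b, φ x := by
  rw [← hf.integral_deriv_eq_sub]
  refine intervalIntegral.integral_mono_ae_restrict hab hf.intervalIntegrable_deriv hφ ?_
  rw [Filter.EventuallyLE, ae_restrict_iff' measurableSet_Icc]
  filter_upwards [hd, Measure.ae_ne volume a, Measure.ae_ne volume b] with x hx hxa hxb hx'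
  exact hx ⟨lt_of_le_of_ne hx'.1 hxa.symm, lt_of_le_of_ne hx'.2 hxb⟩

theorem integral_le_sub_of_ae_le_deriv (hf : AbsolutelyContinuousOnInterval f a b) (hab : a ≤ b)
    (hφ : IntervalIntegrable φ volume a b) (hd : ∀ᵐ x, x ∈ Ioo a b → φ x ≤ deriv f x) :
    ∫ x in a..b, φ x ≤ f b - f a := by
  have := hf.neg.sub_le_integral_of_ae_deriv_le hab hφ.neg <| by
    filter_upwards [hd] with x hx hx'
    simpa [deriv.neg] using hx hx'
  simp only [Pi.neg_apply, intervalIntegral.integral_neg] at this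
  linarith

theorem le_left_of_ae_deriv_nonpos_of_lt {c : ℝ} (hf : AbsolutelyContinuousOnInterval f a b)
    (hfa : f a < c) (hd : ∀ᵐ x, x ∈ Ioo a b → f x < c → deriv f x ≤ 0) :
    ∀ x ∈ Icc a b, f x ≤ f a := by
  intro x hx
  by_contra! hax
  set ℓ := min (f x) ((f a + c) / 2)
  have hℓa : f a < ℓ := lt_min hax (by linarith)
  have hℓc : ℓ < c := (min_le_right _ _).trans_lt (by linarith)
  have hsub : Icc a x ⊆ uIcc a b := by
    rw [uIcc_of_le (hx.1.trans hx.2)]; exact Icc_subset_Icc_right hx.2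
  obtain ⟨u, ⟨hu, hfu⟩, hu_least⟩ : ∃ u, IsLeast (Icc a x ∩ f ⁻¹' Ici ℓ) u := by
    refine IsCompact.exists_isLeast ?_ ⟨x, right_mem_Icc.2 hx.1, show ℓ ≤ f x from min_le_left _ _⟩
    exact isCompact_Icc.of_isClosed_subset
      ((hf.continuousOn.mono hsub).preimage_isClosed_of_isClosed isClosed_Icc isClosed_Ici)
      inter_subset_left
  have hbelow : ∀ y ∈ Ico a u, f y < ℓ := fun y hy => not_le.1 fun hy' =>
    hy.2.not_ge (hu_least ⟨⟨hy.1, hy.2.le.trans hu.2⟩, hy'⟩)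
  have hau : a ≤ u := hu.1
  have := (hf.mono (hsub.trans' (by rw [uIcc_of_le hau]; exact Icc_subset_Icc_right hu.2)))
    |>.sub_le_integral_of_ae_deriv_le hau intervalIntegrable_const <| by
      filter_upwards [hd] with y hy hyu
      exact hy ⟨hyu.1, hyu.2.trans_le (hu.2.trans hx.2)⟩ ((hbelow y ⟨hyu.1.le, hyu.2⟩).trans hℓc)
  simp only [intervalIntegral.integral_zero] at this
  have : ℓ ≤ f u := hfu
  linarith

end AbsolutelyContinuousOnInterval

theorem lipschitzOnWith_inv_of_le_nnnorm {𝕜 : Type*} [NormedDivisionRing 𝕜] {r : ℝ≥0}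
    (hr : 0 < r) : LipschitzOnWith (r ^ 2)⁻¹ (fun x : 𝕜 => x⁻¹) {x | r ≤ ‖x‖₊} := by
  rw [lipschitzOnWith_iff_dist_le_mul]
  intro x hx y hy
  have hx0 : x ≠ 0 := nnnorm_pos.1 (hr.trans_le hx)
  have hy0 : y ≠ 0 := nnnorm_pos.1 (hr.trans_le hy)
  have hxy : (r : ℝ) ^ 2 ≤ ‖x‖ * ‖y‖ := by
    rw [sq]; exact mul_le_mul hx hy r.coe_nonneg (norm_nonneg _)
  rw [dist_eq_norm, dist_eq_norm, inv_sub_inv' hx0 hy0, norm_mul, norm_mul, norm_inv, norm_inv,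
    norm_sub_rev, NNReal.coe_inv, NNReal.coe_pow, inv_mul_eq_div, ← div_eq_mul_inv, div_div,
    inv_mul_eq_div]
  exact div_le_div_of_nonneg_left (norm_nonneg _) (by positivity) hxy

theorem riccati_reciprocal_deriv_lower_bound {β K m₀ m d : ℝ} (hβ : 0 ≤ β) (hK : 0 ≤ K)
    (hm : m ≤ m₀) (hm₀ : m₀ < 0) (hd : d ≤ β * K - β / 2 * m ^ 2) :
    (1 / 2 - K / m₀ ^ 2) * β ≤ -d / m ^ 2 := by
  have hsq : m₀ ^ 2 ≤ m ^ 2 := by nlinarith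
  have hm0 : 0 < m₀ ^ 2 := by nlinarith
  have hm : m ≠ 0 := (hm.trans_lt hm₀).ne
  calc (1 / 2 - K / m₀ ^ 2) * β = β / 2 - β * K / m₀ ^ 2 := by ring
    _ ≤ β / 2 - β * K / m ^ 2 := by gcongr
    _ = -(β * K - β / 2 * m ^ 2) / m ^ 2 := by field_simp; ring
    _ ≤ -d / m ^ 2 := by gcongr

theorem riccati_reciprocal_integral_bound_general
    (Tstar : EReal) (K : ℝ) (hK : 0 < K)
    (β M : ℝ → ℝ)
    (hβc : ContinuousOn β {t : ℝ | 0 ≤ t ∧ (t : EReal) < Tstar})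
    (hβpos : ∀ t : ℝ, 0 ≤ t → (t : EReal) < Tstar → 0 < β t)
    (hMlip : ∀ a b : ℝ, 0 ≤ a → (b : EReal) < Tstar →
      ∃ L : NNReal, LipschitzOnWith L M (Set.Icc a b))
    (hineq : ∀ᵐ (t : ℝ) ∂volume, 0 < t → (t : EReal) < Tstar →
      DifferentiableAt ℝ M t ∧ deriv M t ≤ β t * K - β t / 2 * (M t) ^ 2)
    (hM0 : M 0 < -Real.sqrt (2 * K)) :
    ∀ t : ℝ, 0 ≤ t → (t : EReal) < Tstar →
      (1 / 2 - K / (M 0) ^ 2) * ∫ s in (0 : ℝ)..t, β s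
        ≤ 1 / M t - 1 / M 0 := by
  intro t ht htT
  have hlt : ∀ s ≤ t, (s : EReal) < Tstar := fun s hs => (EReal.coe_le_coe_iff.2 hs).trans_lt htT
  obtain ⟨L, hL⟩ := hMlip 0 t le_rfl htT
  rw [← uIcc_of_le ht] at hL
  have hM_le : ∀ s ∈ Icc 0 t, M s ≤ M 0 := by
    refine hL.absolutelyContinuousOnInterval.le_left_of_ae_deriv_nonpos_of_lt hM0 ?_
    filter_upwards [hineq] with s hs hst hMs
    have hβs := hβpos s hst.1.le (hlt s hst.2.le)
    have h2K : 2 * K < M s ^ 2 := by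
      nlinarith [Real.sq_sqrt (by positivity : (0 : ℝ) ≤ 2 * K), Real.sqrt_nonneg (2 * K)]
    nlinarith [(hs hst.1 (hlt s hst.2.le)).2]
  have hM0_neg : M 0 < 0 := hM0.trans_le (neg_nonpos.2 (Real.sqrt_nonneg _))
  have hMinv : AbsolutelyContinuousOnInterval M⁻¹ 0 t := by
    refine LipschitzOnWith.absolutelyContinuousOnInterval <|
      (lipschitzOnWith_inv_of_le_nnnorm (nnnorm_pos.2 hM0_neg.ne)).comp hL fun s hs => ?_
    rw [uIcc_of_le ht] at hs
    show ‖M 0‖ ≤ ‖M s‖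
    simp only [Real.norm_eq_abs]
    exact abs_le_abs_of_nonpos hM0_neg.le (hM_le s hs)
  have hβint : IntervalIntegrable β volume 0 t :=
    (hβc.mono fun s hs => ⟨hs.1, hlt s hs.2⟩).intervalIntegrable_of_Icc ht
  have key := hMinv.integral_le_sub_of_ae_le_deriv ht (hβint.const_mul (1 / 2 - K / M 0 ^ 2)) <| by
      filter_upwards [hineq] with s hs hst
      obtain ⟨hMd, hMd_le⟩ := hs hst.1 (hlt s hst.2.le)
      have hMs := hM_le s ⟨hst.1.le, hst.2.le⟩
      rw [deriv_inv'' hMd (hMs.trans_lt hM0_neg).ne]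
      exact riccati_reciprocal_deriv_lower_bound (hβpos s hst.1.le (hlt s hst.2.le)).le hK.le
        hMs hM0_neg hMd_le
  rw [intervalIntegral.integral_const_mul] at key
  simpa only [one_div, Pi.inv_apply] using key

/-- Key integral inequality in the proof of Proposition 7.3: under
`M' ≤ β K - (β/2) M²` a.e. on `(0,T*)` and `M(0) < -√(2K)`, one has
`1/M(t) - 1/M(0) ≥ (1/2 - K/M(0)²) ∫₀ᵗ β(s) ds` for all `t ∈ [0,T*)`. -/
theorem riccati_reciprocal_integral_bound
    (Tstar : EReal) (hT : 0 < Tstar) (K : ℝ) (hK : 0 < K)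
    (β M : ℝ → ℝ)
    (hβc : ContinuousOn β {t : ℝ | 0 ≤ t ∧ (t : EReal) < Tstar})
    (hβpos : ∀ t : ℝ, 0 ≤ t → (t : EReal) < Tstar → 0 < β t)
    (hMlip : ∀ a b : ℝ, 0 ≤ a → (b : EReal) < Tstar →
      ∃ L : NNReal, LipschitzOnWith L M (Set.Icc a b))
    (hineq : ∀ᵐ (t : ℝ) ∂volume, 0 < t → (t : EReal) < Tstar →
      DifferentiableAt ℝ M t ∧ deriv M t ≤ β t * K - β t / 2 * (M t) ^ 2)
    (hM0 : M 0 < -Real.sqrt (2 * K)) :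
    ∀ t : ℝ, 0 ≤ t → (t : EReal) < Tstar →
      (1 / 2 - K / (M 0) ^ 2) * ∫ s in (0 : ℝ)..t, β s
        ≤ 1 / M t - 1 / M 0 :=
  riccati_reciprocal_integral_bound_general Tstar K hK β M hβc hβpos hMlip hineq hM0
end

section
/- Let T ∈ (0,∞], let β : [0,T) → ℝ be continuous, and let v : [0,T) × ℝ → ℝ be smooth and 2π-periodic in its spatial variable, satisfying v_t − v_{txx} + 3β(t) v v_x = 2β(t) v_x v_{xx} + β(t) v v_{xxx} at every point of [0,T) × ℝ. Then the energy E(t) := ∫₀^{2π} ( v(t,x)² + v_x(t,x)² ) dx is constant in time: E(t) = E(0) for every t ∈ [0,T). -/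
/-!
Along a smooth periodic solution, the time derivative `2 v v_t + 2 v_x v_{tx}` of the energy
density is, by the equation, the `x`-derivative of the periodic flux
`2β v² v_{xx} - 2β v³ + 2 v v_{tx}` (this uses `∂ₓ v_{tx} = v_{txx}`, the symmetry of the
mixed partials). Differentiating under the integral sign, `E' = 0` at every interior time, and
`E` is continuous up to `t = 0`, so `E` is constant by the mean value theorem.
-/

open MeasureTheory

/-- The time interval `[0,T)`, where `T ∈ (0,∞]` is encoded as an `EReal`. -/
def timeInt (T : EReal) : Set ℝ := {t : ℝ | 0 ≤ t ∧ (t : EReal) < T}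

open Set Filter Topology Function intervalIntegral

variable {E : Type*} [NormedAddCommGroup E] [NormedSpace ℝ E]

theorem Function.Periodic.hasDerivAt_periodic {g g' : ℝ → E} {p : ℝ} (hg : Periodic g p)
    (hg' : ∀ x, HasDerivAt g (g' x) x) : Periodic g' p := by
  intro x
  have h := (hg' (x + p)).comp_add_const x p
  rw [show (fun y => g (y + p)) = g from funext hg] at h
  exact h.unique (hg' x)

theorem periodic_of_hasDerivAt_of_eventually_periodic {f : ℝ → ℝ → E} {f' : ℝ → E}
    {p t : ℝ} (hper : ∀ᶠ s in 𝓝 t, Periodic (f s) p)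
    (hf : ∀ x, HasDerivAt (f · x) (f' x) t) :
    Periodic f' p :=
  fun x => (hf (x + p)).unique ((hf x).congr_of_eventuallyEq (hper.mono fun _ hs => hs x))

theorem Function.Periodic.intervalIntegral_eq_zero_of_hasDerivAt [CompleteSpace E]
    {g g' : ℝ → E} {p : ℝ} (hg : Periodic g p) (hg' : ∀ x, HasDerivAt g (g' x) x) (a : ℝ)
    (hint : IntervalIntegrable g' volume a (a + p)) : ∫ x in a..a + p, g' x = 0 := by
  rw [integral_eq_sub_of_hasDerivAt (fun x _ => hg' x) hint, hg a, sub_self]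

theorem continuousOn_intervalIntegral_of_continuousOn {X : Type*} [TopologicalSpace X]
    {K : Set X} {F : X → ℝ → E} (hF : ContinuousOn (uncurry F) (K ×ˢ univ)) (a b : ℝ) :
    ContinuousOn (fun s => ∫ x in a..b, F s x) K := by
  rw [continuousOn_iff_continuous_domRestrict]
  refine continuous_parametric_intervalIntegral_of_continuous' (f := fun (s : K) x => F s x)
    ?_ a b
  exact hF.comp_continuous (continuous_subtype_val.prodMap continuous_id)
    fun p => ⟨p.1.2, trivial⟩

theorem hasDerivAt_intervalIntegral_of_continuousOn {U : Set ℝ} (hU : IsOpen U)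
    {F F' : ℝ → ℝ → E} (hF : ∀ s ∈ U, Continuous (F s))
    (hF' : ContinuousOn (uncurry F') (U ×ˢ univ))
    (hdiff : ∀ s ∈ U, ∀ x, HasDerivAt (F · x) (F' s x) s) {t : ℝ} (ht : t ∈ U)
    (a b : ℝ) : HasDerivAt (fun s => ∫ x in a..b, F s x) (∫ x in a..b, F' t x) t := by
  obtain ⟨ε, hε, hball⟩ := Metric.nhds_basis_closedBall.mem_iff.1 (hU.mem_nhds ht)
  obtain ⟨C, hC⟩ := ((isCompact_closedBall t ε).prod (isCompact_uIcc (a := a) (b := b))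
    ).exists_bound_of_continuousOn (hF'.mono (prod_mono hball (subset_univ _)))
  refine (hasDerivAt_integral_of_dominated_loc_of_deriv_le (bound := fun _ => C)
    (Metric.closedBall_mem_nhds t hε) ?_ ((hF t ht).intervalIntegrable a b) ?_ ?_
    intervalIntegrable_const ?_).2
  · filter_upwards [hU.mem_nhds ht] with s hs using (hF s hs).aestronglyMeasurable
  · exact (continuousOn_univ.1 (hF'.uncurry_left t ht)).aestronglyMeasurable
  · exact Eventually.of_forall fun x hx s hs => hC (s, x) ⟨hs, uIoc_subset_uIcc hx⟩
  · exact Eventually.of_forall fun x _ s hs => hdiff s (hball hs) x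

theorem hasDerivAt_of_mixed_partials [CompleteSpace E] {U : Set ℝ} (hU : IsOpen U)
    {f fx ft ftx : ℝ → ℝ → E}
    (hfx : ∀ s ∈ U, ∀ x, HasDerivAt (f s) (fx s x) x)
    (hft : ∀ s ∈ U, ∀ x, HasDerivAt (f · x) (ft s x) s)
    (hfxt : ∀ s ∈ U, ∀ x, HasDerivAt (fx · x) (ftx s x) s)
    (hfx_cont : ContinuousOn (uncurry fx) (U ×ˢ univ))
    (hftx_cont : ContinuousOn (uncurry ftx) (U ×ˢ univ)) {t : ℝ} (ht : t ∈ U) (x : ℝ) :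
    HasDerivAt (ft t) (ftx t x) x := by
  have hfx_line : ∀ s ∈ U, Continuous (fx s) := fun s hs =>
    continuousOn_univ.1 (hfx_cont.uncurry_left s hs)
  have hprimitive : ∀ y, ft t y = ft t 0 + ∫ z in 0..y, ftx t z := by
    intro y
    -- both sides minus `ft t 0` are `∂ₜ` of `f · y - f · 0 = ∫ z in 0..y, fx · z`
    have hsub : HasDerivAt (fun s => f s y - f s 0) (ft t y - ft t 0) t :=
      (hft t ht y).sub (hft t ht 0)
    have hint : HasDerivAt (fun s => f s y - f s 0) (∫ z in 0..y, ftx t z) t := by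
      refine (hasDerivAt_intervalIntegral_of_continuousOn hU hfx_line hftx_cont hfxt ht 0 y
        ).congr_of_eventuallyEq ?_
      filter_upwards [hU.mem_nhds ht] with s hs
      exact (integral_eq_sub_of_hasDerivAt (fun z _ => hfx s hs z)
        ((hfx_line s hs).intervalIntegrable 0 y)).symm
    rw [← hsub.unique hint, add_sub_cancel]
  rw [funext hprimitive]
  exact ((continuousOn_univ.1 (hftx_cont.uncurry_left t ht)).integral_hasStrictDerivAt 0 x
    ).hasDerivAt.const_add _

theorem eq_of_continuousOn_Icc_of_hasDerivAt_zero {f : ℝ → ℝ} {a b : ℝ} (hab : a ≤ b)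
    (hf : ContinuousOn f (Icc a b)) (hf' : ∀ x ∈ Ioo a b, HasDerivAt f 0 x) : f b = f a := by
  rcases hab.eq_or_lt with rfl | hlt
  · rfl
  obtain ⟨c, -, hc⟩ := exists_hasDerivAt_eq_slope f (fun _ => 0) hlt hf hf'
  rw [eq_comm, div_eq_zero_iff, sub_eq_zero] at hc
  exact hc.resolve_right (sub_ne_zero.2 hlt.ne')

theorem integral_CH_energy_density_eq_zero {b p : ℝ} {u ut ux uxx uxxx utx utxx : ℝ → ℝ}
    (hu : Periodic u p) (hutx : Periodic utx p)
    (hux : ∀ x, HasDerivAt u (ux x) x) (huxx : ∀ x, HasDerivAt ux (uxx x) x)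
    (huxxx : ∀ x, HasDerivAt uxx (uxxx x) x) (hutxx : ∀ x, HasDerivAt utx (utxx x) x)
    (hdens : Continuous fun x => 2 * u x * ut x + 2 * ux x * utx x)
    (hPDE : ∀ x, ut x - utxx x + 3 * b * u x * ux x = 2 * b * ux x * uxx x + b * u x * uxxx x) :
    ∫ x in 0..p, (2 * u x * ut x + 2 * ux x * utx x) = 0 := by
  have huxx_per : Periodic uxx p := (hu.hasDerivAt_periodic hux).hasDerivAt_periodic huxx
  have hflux_per : Periodic
      (fun y => 2 * b * (u y ^ 2 * uxx y) - 2 * b * u y ^ 3 + 2 * (u y * utx y)) p :=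
    fun x => by simp only [hu x, huxx_per x, hutx x]
  have hflux : ∀ x, HasDerivAt
      (fun y => 2 * b * (u y ^ 2 * uxx y) - 2 * b * u y ^ 3 + 2 * (u y * utx y))
      (2 * u x * ut x + 2 * ux x * utx x) x := by
    intro x
    refine (((((hux x).fun_pow 2).fun_mul (huxxx x)).const_mul (2 * b)).fun_sub
      (((hux x).fun_pow 3).const_mul (2 * b))).fun_add
      (((hux x).fun_mul (hutxx x)).const_mul 2) |>.congr_deriv ?_
    norm_num
    linear_combination (-2 * u x) * hPDE x
  simpa using hflux_per.intervalIntegral_eq_zero_of_hasDerivAt hflux 0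
    (hdens.intervalIntegrable _ _)

theorem hasDerivAt_CH_energy_eq_zero {U : Set ℝ} (hU : IsOpen U) {b : ℝ → ℝ} {p : ℝ}
    {v vt vx vxx vxxx vtx vtxx : ℝ → ℝ → ℝ} (hper : ∀ s ∈ U, Periodic (v s) p)
    (hvx : ∀ s ∈ U, ∀ x, HasDerivAt (v s) (vx s x) x)
    (hvxx : ∀ s ∈ U, ∀ x, HasDerivAt (vx s) (vxx s x) x)
    (hvxxx : ∀ s ∈ U, ∀ x, HasDerivAt (vxx s) (vxxx s x) x)
    (hvt : ∀ s ∈ U, ∀ x, HasDerivAt (v · x) (vt s x) s)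
    (hvtx : ∀ s ∈ U, ∀ x, HasDerivAt (vx · x) (vtx s x) s)
    (hvtxx : ∀ s ∈ U, ∀ x, HasDerivAt (vxx · x) (vtxx s x) s)
    (hv_cont : ContinuousOn (uncurry v) (U ×ˢ univ))
    (hvt_cont : ContinuousOn (uncurry vt) (U ×ˢ univ))
    (hvx_cont : ContinuousOn (uncurry vx) (U ×ˢ univ))
    (hvxx_cont : ContinuousOn (uncurry vxx) (U ×ˢ univ))
    (hvtx_cont : ContinuousOn (uncurry vtx) (U ×ˢ univ))
    (hvtxx_cont : ContinuousOn (uncurry vtxx) (U ×ˢ univ))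
    (hPDE : ∀ s ∈ U, ∀ x, vt s x - vtxx s x + 3 * b s * v s x * vx s x
      = 2 * b s * vx s x * vxx s x + b s * v s x * vxxx s x) {t : ℝ} (ht : t ∈ U) :
    HasDerivAt (fun s => ∫ x in 0..p, v s x ^ 2 + vx s x ^ 2) 0 t := by
  have hvtx_per : Periodic (vtx t) p := periodic_of_hasDerivAt_of_eventually_periodic
    (eventually_of_mem (hU.mem_nhds ht) fun s hs => (hper s hs).hasDerivAt_periodic (hvx s hs))
    (hvtx t ht)
  have hdens : ContinuousOn (uncurry fun s x => 2 * v s x * vt s x + 2 * vx s x * vtx s x)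
      (U ×ˢ univ) :=
    ((continuousOn_const.mul hv_cont).mul hvt_cont).add
      ((continuousOn_const.mul hvx_cont).mul hvtx_cont)
  have hdens_deriv : ∀ s ∈ U, ∀ x, HasDerivAt (fun r => v r x ^ 2 + vx r x ^ 2)
      (2 * v s x * vt s x + 2 * vx s x * vtx s x) s := by
    intro s hs x
    refine ((hvt s hs x).fun_pow 2).fun_add ((hvtx s hs x).fun_pow 2) |>.congr_deriv ?_
    norm_num
  have henergy_cont : ∀ s ∈ U, Continuous fun x => v s x ^ 2 + vx s x ^ 2 := fun s hs =>
    continuous_iff_continuousAt.2 fun x =>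
      (((hvx s hs x).continuousAt.pow 2).add ((hvxx s hs x).continuousAt.pow 2))
  exact (hasDerivAt_intervalIntegral_of_continuousOn hU henergy_cont hdens hdens_deriv ht 0 p
    ).congr_deriv (integral_CH_energy_density_eq_zero (hper t ht) hvtx_per (hvx t ht) (hvxx t ht)
      (hvxxx t ht) (hasDerivAt_of_mixed_partials hU hvxx hvtx hvtxx hvxx_cont hvtxx_cont ht)
      (continuousOn_univ.1 (hdens.uncurry_left t ht)) (hPDE t ht))

theorem Icc_subset_timeInt {T : EReal} {t : ℝ} (ht : t ∈ timeInt T) : Icc 0 t ⊆ timeInt T :=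
  fun _ hs => ⟨hs.1, lt_of_le_of_lt (EReal.coe_le_coe_iff.2 hs.2) ht.2⟩

theorem rescaled_CH_energy_conservation_general
    (T : EReal) (β : ℝ → ℝ)
    (v vt vx vxx vxxx vtx vtxx : ℝ → ℝ → ℝ)
    (hper : ∀ t ∈ timeInt T, ∀ x : ℝ, v t (x + 2 * Real.pi) = v t x)
    (hvx : ∀ t ∈ timeInt T, ∀ x : ℝ, HasDerivAt (fun y => v t y) (vx t x) x)
    (hvxx : ∀ t ∈ timeInt T, ∀ x : ℝ, HasDerivAt (fun y => vx t y) (vxx t x) x)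
    (hvxxx : ∀ t ∈ timeInt T, ∀ x : ℝ, HasDerivAt (fun y => vxx t y) (vxxx t x) x)
    (hvt : ∀ x : ℝ, ∀ t ∈ timeInt T,
      HasDerivWithinAt (fun s => v s x) (vt t x) (timeInt T) t)
    (hvtx : ∀ x : ℝ, ∀ t ∈ timeInt T,
      HasDerivWithinAt (fun s => vx s x) (vtx t x) (timeInt T) t)
    (hvtxx : ∀ x : ℝ, ∀ t ∈ timeInt T,
      HasDerivWithinAt (fun s => vxx s x) (vtxx t x) (timeInt T) t)
    (hcont : ∀ f ∈ [v, vt, vx, vxx, vxxx, vtx, vtxx],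
      ContinuousOn (fun p : ℝ × ℝ => f p.1 p.2) {p : ℝ × ℝ | p.1 ∈ timeInt T})
    (hPDE : ∀ t ∈ timeInt T, ∀ x : ℝ,
      vt t x - vtxx t x + 3 * β t * v t x * vx t x
        = 2 * β t * vx t x * vxx t x + β t * v t x * vxxx t x) :
    ∀ t ∈ timeInt T,
      (∫ x in (0 : ℝ)..(2 * Real.pi), ((v t x) ^ 2 + (vx t x) ^ 2))
        = ∫ x in (0 : ℝ)..(2 * Real.pi), ((v 0 x) ^ 2 + (vx 0 x) ^ 2) := by
  intro t ht
  set I := timeInt T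
  have hcI : ∀ f ∈ [v, vt, vx, vxx, vxxx, vtx, vtxx],
      ContinuousOn (uncurry f) (interior I ×ˢ univ) :=
    fun f hf => (hcont f hf).mono fun _ hp => interior_subset (s := I) hp.1
  have hI : ∀ s ∈ interior I, I ∈ 𝓝 s := fun s hs => mem_interior_iff_mem_nhds.1 hs
  have henergy : ContinuousOn (uncurry fun s x => v s x ^ 2 + vx s x ^ 2) (Icc 0 t ×ˢ univ) :=
    (((hcont v (by simp)).pow 2).add ((hcont vx (by simp)).pow 2)).mono
      fun _ hp => Icc_subset_timeInt ht hp.1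
  refine eq_of_continuousOn_Icc_of_hasDerivAt_zero ht.1
    (continuousOn_intervalIntegral_of_continuousOn henergy _ _) fun s hs => ?_
  exact hasDerivAt_CH_energy_eq_zero isOpen_interior (p := 2 * Real.pi)
    (fun s hs => hper s (interior_subset hs)) (fun s hs => hvx s (interior_subset hs))
    (fun s hs => hvxx s (interior_subset hs)) (fun s hs => hvxxx s (interior_subset hs))
    (fun s hs x => (hvt x s (interior_subset hs)).hasDerivAt (hI s hs))
    (fun s hs x => (hvtx x s (interior_subset hs)).hasDerivAt (hI s hs))
    (fun s hs x => (hvtxx x s (interior_subset hs)).hasDerivAt (hI s hs))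
    (hcI v (by simp)) (hcI vt (by simp)) (hcI vx (by simp)) (hcI vxx (by simp))
    (hcI vtx (by simp)) (hcI vtxx (by simp)) (fun s hs => hPDE s (interior_subset hs))
    (interior_mono (Icc_subset_timeInt ht) (by rwa [interior_Icc]))

/-- Conservation of the `H¹` energy `E(t) = ∫₀^{2π} (v² + v_x²) dx` for smooth
`2π`-periodic solutions of the rescaled Camassa–Holm equation
`v_t - v_{txx} + 3β v v_x = 2β v_x v_{xx} + β v v_{xxx}` on `[0,T) × ℝ`.
The partial derivatives `v_x, v_{xx}, v_{xxx}, v_t, v_{tx}, v_{txx}` are given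
as functions together with the corresponding derivative facts and continuity
(this is the meaning of "smooth" here). -/
theorem rescaled_CH_energy_conservation
    (T : EReal) (hT : 0 < T) (β : ℝ → ℝ)
    (v vt vx vxx vxxx vtx vtxx : ℝ → ℝ → ℝ)
    (hβ : ContinuousOn β (timeInt T))
    (hper : ∀ t ∈ timeInt T, ∀ x : ℝ, v t (x + 2 * Real.pi) = v t x)
    (hvx : ∀ t ∈ timeInt T, ∀ x : ℝ, HasDerivAt (fun y => v t y) (vx t x) x)
    (hvxx : ∀ t ∈ timeInt T, ∀ x : ℝ, HasDerivAt (fun y => vx t y) (vxx t x) x)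
    (hvxxx : ∀ t ∈ timeInt T, ∀ x : ℝ, HasDerivAt (fun y => vxx t y) (vxxx t x) x)
    (hvt : ∀ x : ℝ, ∀ t ∈ timeInt T,
      HasDerivWithinAt (fun s => v s x) (vt t x) (timeInt T) t)
    (hvtx : ∀ x : ℝ, ∀ t ∈ timeInt T,
      HasDerivWithinAt (fun s => vx s x) (vtx t x) (timeInt T) t)
    (hvtxx : ∀ x : ℝ, ∀ t ∈ timeInt T,
      HasDerivWithinAt (fun s => vxx s x) (vtxx t x) (timeInt T) t)
    (hcont : ∀ f ∈ [v, vt, vx, vxx, vxxx, vtx, vtxx],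
      ContinuousOn (fun p : ℝ × ℝ => f p.1 p.2) {p : ℝ × ℝ | p.1 ∈ timeInt T})
    (hPDE : ∀ t ∈ timeInt T, ∀ x : ℝ,
      vt t x - vtxx t x + 3 * β t * v t x * vx t x
        = 2 * β t * vx t x * vxx t x + β t * v t x * vxxx t x) :
    ∀ t ∈ timeInt T,
      (∫ x in (0 : ℝ)..(2 * Real.pi), ((v t x) ^ 2 + (vx t x) ^ 2))
        = ∫ x in (0 : ℝ)..(2 * Real.pi), ((v 0 x) ^ 2 + (vx 0 x) ^ 2) :=
  rescaled_CH_energy_conservation_general T β v vt vx vxx vxxx vtx vtxx hper hvx hvxx hvxxx hvt hvtx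
    hvtxx hcont hPDE
end

section
/- Let T ∈ (0,∞], let β : [0,T) → ℝ be continuous, and let v : [0,T) × ℝ → ℝ be smooth and 2π-periodic in its spatial variable, satisfying v_t − v_{txx} + 3β(t) v v_x = 2β(t) v_x v_{xx} + β(t) v v_{xxx} at every point of [0,T) × ℝ. Define V := v − v_{xx}. Then: (i) for every t ∈ [0,T), d/dt ∫₀^{2π} V(t,x)² dx = −3 β(t) ∫₀^{2π} V(t,x)² v_x(t,x) dx; and (ii) if K > 0 is such that β(t) v_x(t,x) ≥ −K for all (t,x) ∈ [0,T) × ℝ, then ∫₀^{2π} V(t,x)² dx ≤ e^{3Kt} ∫₀^{2π} V(0,x)² dx for all t ∈ [0,T). -/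
open MeasureTheory Set Filter Topology Function

theorem Function.Periodic.deriv {𝕜 F : Type*} [NontriviallyNormedField 𝕜] [NormedAddCommGroup F]
    [NormedSpace 𝕜 F] {f : 𝕜 → F} {c : 𝕜} (hf : Periodic f c) : Periodic (deriv f) c := fun x => by
  rw [← deriv_comp_add_const, show (fun y => f (y + c)) = f from funext hf]

theorem Function.Periodic.intervalIntegral_eq_zero_of_hasDerivAt_s16 {E : Type*}
    [NormedAddCommGroup E] [NormedSpace ℝ E] [CompleteSpace E] {f f' : ℝ → E} {c : ℝ}
    (hf : Periodic f c) (hderiv : ∀ x, HasDerivAt f (f' x) x)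
    (hint : IntervalIntegrable f' volume 0 c) : ∫ x in 0..c, f' x = 0 := by
  rw [intervalIntegral.integral_eq_sub_of_hasDerivAt (fun x _ => hderiv x) hint, hf.eq, sub_self]

theorem continuousOn_parametric_intervalIntegral_of_continuousOn {X E : Type*}
    [TopologicalSpace X] [NormedAddCommGroup E] [NormedSpace ℝ E] {S : Set X} {F : X → ℝ → E}
    (hF : ContinuousOn (uncurry F) (Prod.fst ⁻¹' S)) (a b : ℝ) :
    ContinuousOn (fun s => ∫ x in a..b, F s x) S := by
  rw [continuousOn_iff_continuous_domRestrict]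
  have hF' : Continuous (uncurry fun (q : S) x => F q x) :=
    hF.comp_continuous (continuous_subtype_val.prodMap continuous_id) fun q => q.1.2
  exact intervalIntegral.continuous_parametric_intervalIntegral_of_continuous' hF' a b

theorem le_exp_mul_of_hasDerivWithinAt_le {S : Set ℝ} (hS : Convex ℝ S) {f f' : ℝ → ℝ} {c : ℝ}
    (hf : ∀ t ∈ S, HasDerivWithinAt f (f' t) S t) (hle : ∀ t ∈ S, f' t ≤ c * f t)
    {a t : ℝ} (ha : a ∈ S) (ht : t ∈ S) (hat : a ≤ t) :
    f t ≤ Real.exp (c * (t - a)) * f a := by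
  set g : ℝ → ℝ := fun s => Real.exp (-c * s) * f s
  have hg : ∀ s ∈ S, HasDerivWithinAt g (Real.exp (-c * s) * (f' s - c * f s)) S s := by
    intro s hs
    have hexp : HasDerivAt (fun u => Real.exp (-c * u)) (Real.exp (-c * s) * -c) s := by
      simpa using ((hasDerivAt_id s).const_mul (-c)).exp
    exact (hexp.hasDerivWithinAt.mul (hf s hs)).congr_deriv (by ring)
  have hanti : AntitoneOn g S :=
    antitoneOn_of_hasDerivWithinAt_nonpos hS (fun s hs => (hg s hs).continuousWithinAt)
      (fun s hs => (hg s (interior_subset hs)).mono interior_subset)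
      (fun s hs => mul_nonpos_of_nonneg_of_nonpos (Real.exp_pos _).le
        (sub_nonpos.2 (hle s (interior_subset hs))))
  have hga : Real.exp (-c * t) * f t ≤ Real.exp (-c * a) * f a := hanti ha ht hat
  calc f t = Real.exp (c * t) * (Real.exp (-c * t) * f t) := by
        rw [← mul_assoc, ← Real.exp_add, show c * t + -c * t = 0 by ring, Real.exp_zero, one_mul]
    _ ≤ Real.exp (c * t) * (Real.exp (-c * a) * f a) := by gcongr
    _ = Real.exp (c * (t - a)) * f a := by rw [← mul_assoc, ← Real.exp_add]; ring_nf

section timeInt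

variable {T : EReal} {t : ℝ}

theorem zero_mem_timeInt (hT : 0 < T) : (0 : ℝ) ∈ timeInt T :=
  ⟨le_rfl, by simpa using hT⟩

instance : OrdConnected (timeInt T) :=
  ⟨fun _ hx _ hy _ hz => ⟨hx.1.trans hz.1, (EReal.coe_le_coe_iff.2 hz.2).trans_lt hy.2⟩⟩

theorem Icc_zero_subset_timeInt (ht : t ∈ timeInt T) : Icc 0 t ⊆ timeInt T :=
  Set.Icc_subset _ ⟨le_rfl, (EReal.coe_le_coe_iff.2 ht.1).trans_lt ht.2⟩ ht

theorem exists_gt_mem_timeInt (ht : t ∈ timeInt T) : ∃ b ∈ timeInt T, t < b := by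
  obtain ⟨c, htc, hcT⟩ := EReal.lt_iff_exists_real_btwn.1 ht.2
  obtain ⟨b, htb, hbc⟩ := exists_between (EReal.coe_lt_coe_iff.1 htc)
  exact ⟨b, ⟨ht.1.trans htb.le, (EReal.coe_lt_coe_iff.2 hbc).trans hcT⟩, htb⟩

theorem timeInt_mem_nhds (ht : t ∈ timeInt T) (h0 : 0 < t) : timeInt T ∈ 𝓝 t := by
  obtain ⟨b, hb, htb⟩ := exists_gt_mem_timeInt ht
  exact mem_of_superset (Ioo_mem_nhds h0 htb)
    (Ioo_subset_Icc_self.trans (Icc_zero_subset_timeInt hb))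

theorem hasDerivWithinAt_integral_timeInt {φ : ℝ → ℝ} (hφ : ContinuousOn φ (timeInt T))
    (ht : t ∈ timeInt T) :
    HasDerivWithinAt (fun u => ∫ s in 0..u, φ s) (φ t) (timeInt T) t := by
  obtain ⟨b, hb, htb⟩ := exists_gt_mem_timeInt ht
  have : Fact (t ∈ Icc 0 b) := ⟨⟨ht.1, htb.le⟩⟩
  have hφb : ContinuousOn φ (Icc 0 b) := hφ.mono (Icc_zero_subset_timeInt hb)
  have hloc : Icc 0 b ∈ 𝓝[timeInt T] t :=
    mem_nhdsWithin.2 ⟨Iio b, isOpen_Iio, htb, fun z hz => ⟨hz.2.1, hz.1.le⟩⟩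
  exact (intervalIntegral.integral_hasDerivWithinAt_right
    (hφ.mono (Icc_zero_subset_timeInt ht) |>.intervalIntegrable_of_Icc ht.1)
    (hφb.stronglyMeasurableAtFilter_nhdsWithin measurableSet_Icc t)
    (hφb t ⟨ht.1, htb.le⟩)).mono_of_mem_nhdsWithin hloc

variable {f f' : ℝ → ℝ → ℝ} {a b : ℝ}

theorem intervalIntegral_eq_add_integral_intervalIntegral_timeInt
    (hf : ContinuousOn (uncurry f) (Prod.fst ⁻¹' timeInt T))
    (hf' : ContinuousOn (uncurry f') (Prod.fst ⁻¹' timeInt T))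
    (hderiv : ∀ x, ∀ s ∈ timeInt T, HasDerivWithinAt (f · x) (f' s x) (timeInt T) s)
    (hT : 0 < T) (ht : t ∈ timeInt T) :
    ∫ x in a..b, f t x = (∫ x in a..b, f 0 x) + ∫ s in 0..t, ∫ x in a..b, f' s x := by
  have hIcc := Icc_zero_subset_timeInt ht
  have hslice : ∀ s ∈ timeInt T, Continuous (f s) := fun s hs =>
    hf.comp_continuous (Continuous.prodMk_right s) fun _ => hs
  have hftc : ∀ x, ∫ s in 0..t, f' s x = f t x - f 0 x := fun x =>
    intervalIntegral.integral_eq_sub_of_hasDerivAt_of_le ht.1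
      (fun s hs => ((hderiv x s (hIcc hs)).continuousWithinAt).mono hIcc)
      (fun s hs => (hderiv x s (hIcc (Ioo_subset_Icc_self hs))).hasDerivAt
        (timeInt_mem_nhds (hIcc (Ioo_subset_Icc_self hs)) hs.1))
      ((hf'.comp (Continuous.prodMk_left x).continuousOn fun _ hs => hs).mono hIcc
        |>.intervalIntegrable_of_Icc ht.1)
  have hint : IntegrableOn (uncurry f') (uIoc 0 t ×ˢ uIoc a b) :=
    (ContinuousOn.integrableOn_compact (isCompact_Icc.prod isCompact_uIcc)
      (hf'.mono fun _ hp => hIcc hp.1)).mono_set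
      (prod_mono (uIoc_of_le ht.1 ▸ Ioc_subset_Icc_self) uIoc_subset_uIcc)
  rw [intervalIntegral_intervalIntegral_swap hint]
  simp_rw [hftc]
  rw [intervalIntegral.integral_sub ((hslice t ht).intervalIntegrable _ _)
    ((hslice 0 (zero_mem_timeInt hT)).intervalIntegrable _ _)]
  ring

theorem hasDerivWithinAt_intervalIntegral_timeInt
    (hf : ContinuousOn (uncurry f) (Prod.fst ⁻¹' timeInt T))
    (hf' : ContinuousOn (uncurry f') (Prod.fst ⁻¹' timeInt T))
    (hderiv : ∀ x, ∀ s ∈ timeInt T, HasDerivWithinAt (f · x) (f' s x) (timeInt T) s)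
    (hT : 0 < T) (ht : t ∈ timeInt T) :
    HasDerivWithinAt (fun s => ∫ x in a..b, f s x) (∫ x in a..b, f' t x) (timeInt T) t :=
  ((hasDerivWithinAt_integral_timeInt
    (continuousOn_parametric_intervalIntegral_of_continuousOn hf' a b) ht).const_add _).congr
    (fun _ hs => intervalIntegral_eq_add_integral_intervalIntegral_timeInt hf hf' hderiv hT hs)
    (intervalIntegral_eq_add_integral_intervalIntegral_timeInt hf hf' hderiv hT ht)

end timeInt

theorem intervalIntegral_two_mul_momentum_mul_time_deriv_eq {p b : ℝ}
    {u ux uxx uxxx ut utxx : ℝ → ℝ}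
    (hper : Periodic u p) (hux : ∀ x, HasDerivAt u (ux x) x)
    (huxx : ∀ x, HasDerivAt ux (uxx x) x) (huxxx : ∀ x, HasDerivAt uxx (uxxx x) x)
    (hcont : Continuous uxxx)
    (hpde : ∀ x, ut x - utxx x + 3 * b * u x * ux x
      = 2 * b * ux x * uxx x + b * u x * uxxx x) :
    ∫ x in 0..p, 2 * (u x - uxx x) * (ut x - utxx x)
      = -3 * b * ∫ x in 0..p, (u x - uxx x) ^ 2 * ux x := by
  have hperx : Periodic ux p := funext (fun x => (hux x).deriv) ▸ hper.deriv
  have hperxx : Periodic uxx p := funext (fun x => (huxx x).deriv) ▸ hperx.deriv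
  have hcu : Continuous u := continuous_iff_continuousAt.2 fun x => (hux x).continuousAt
  have hcux : Continuous ux := continuous_iff_continuousAt.2 fun x => (huxx x).continuousAt
  have hcuxx : Continuous uxx := continuous_iff_continuousAt.2 fun x => (huxxx x).continuousAt
  set flux : ℝ → ℝ := fun x => -b * (u x * (u x - uxx x) ^ 2)
  set flux' : ℝ → ℝ := fun x => -b * (ux x * (u x - uxx x) ^ 2
    + u x * (2 * (u x - uxx x) * (ux x - uxxx x)))
  have hflux : ∀ x, HasDerivAt flux (flux' x) x := fun x =>
    (((hux x).mul (((hux x).sub (huxxx x)).pow 2)).const_mul (-b)).congr_deriv (by simp; ring)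
  have hflux_per : Periodic flux p := fun x => by simp only [flux, hper x, hperxx x]
  have hflux_int : ∫ x in 0..p, flux' x = 0 :=
    hflux_per.intervalIntegral_eq_zero_of_hasDerivAt_s16 hflux
      (by apply Continuous.intervalIntegrable; fun_prop)
  have hpointwise : ∀ x, 2 * (u x - uxx x) * (ut x - utxx x)
      = -3 * b * ((u x - uxx x) ^ 2 * ux x) + flux' x := fun x => by
    linear_combination (2 * (u x - uxx x)) * hpde x
  rw [intervalIntegral.integral_congr fun x _ => hpointwise x, intervalIntegral.integral_add
    (by apply Continuous.intervalIntegrable; fun_prop)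
    (by apply Continuous.intervalIntegrable; fun_prop), hflux_int, add_zero,
    intervalIntegral.integral_const_mul]

theorem neg_mul_intervalIntegral_sq_mul_le {g w : ℝ → ℝ} {a b c K : ℝ} (hab : a ≤ b)
    (hg : Continuous g) (hw : Continuous w) (hbound : ∀ x, -K ≤ c * w x) :
    -(c * ∫ x in a..b, g x ^ 2 * w x) ≤ K * ∫ x in a..b, g x ^ 2 := by
  rw [← intervalIntegral.integral_const_mul, ← intervalIntegral.integral_neg,
    ← intervalIntegral.integral_const_mul]
  refine intervalIntegral.integral_mono_on hab (by apply Continuous.intervalIntegrable; fun_prop)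
    (by apply Continuous.intervalIntegrable; fun_prop) fun x _ => ?_
  nlinarith [mul_nonneg (sq_nonneg (g x)) (neg_le_iff_add_nonneg.1 (hbound x))]

theorem rescaled_CH_momentum_L2_identity_and_gronwall_general
    (T : EReal) (hT : 0 < T) (β : ℝ → ℝ)
    (v vt vx vxx vxxx vtx vtxx : ℝ → ℝ → ℝ)
    (hper : ∀ t ∈ timeInt T, ∀ x : ℝ, v t (x + 2 * Real.pi) = v t x)
    (hvx : ∀ t ∈ timeInt T, ∀ x : ℝ, HasDerivAt (fun y => v t y) (vx t x) x)
    (hvxx : ∀ t ∈ timeInt T, ∀ x : ℝ, HasDerivAt (fun y => vx t y) (vxx t x) x)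
    (hvxxx : ∀ t ∈ timeInt T, ∀ x : ℝ, HasDerivAt (fun y => vxx t y) (vxxx t x) x)
    (hvt : ∀ x : ℝ, ∀ t ∈ timeInt T,
      HasDerivWithinAt (fun s => v s x) (vt t x) (timeInt T) t)
    (hvtxx : ∀ x : ℝ, ∀ t ∈ timeInt T,
      HasDerivWithinAt (fun s => vxx s x) (vtxx t x) (timeInt T) t)
    (hcont : ∀ f ∈ [v, vt, vx, vxx, vxxx, vtx, vtxx],
      ContinuousOn (fun p : ℝ × ℝ => f p.1 p.2) {p : ℝ × ℝ | p.1 ∈ timeInt T})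
    (hPDE : ∀ t ∈ timeInt T, ∀ x : ℝ,
      vt t x - vtxx t x + 3 * β t * v t x * vx t x
        = 2 * β t * vx t x * vxx t x + β t * v t x * vxxx t x) :
    (∀ t ∈ timeInt T,
      HasDerivWithinAt
        (fun s => ∫ x in (0 : ℝ)..(2 * Real.pi), (v s x - vxx s x) ^ 2)
        (-3 * β t * ∫ x in (0 : ℝ)..(2 * Real.pi), (v t x - vxx t x) ^ 2 * vx t x)
        (timeInt T) t) ∧
    (∀ K : ℝ, 0 < K → (∀ t ∈ timeInt T, ∀ x : ℝ, -K ≤ β t * vx t x) →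
      ∀ t ∈ timeInt T,
        (∫ x in (0 : ℝ)..(2 * Real.pi), (v t x - vxx t x) ^ 2)
          ≤ Real.exp (3 * K * t) *
              ∫ x in (0 : ℝ)..(2 * Real.pi), (v 0 x - vxx 0 x) ^ 2) := by
  have hslice : ∀ f ∈ [v, vt, vx, vxx, vxxx, vtx, vtxx], ∀ t ∈ timeInt T, Continuous (f t) :=
    fun f hf t ht => (hcont f hf).comp_continuous (Continuous.prodMk_right t) fun _ => ht
  have henergy : ∀ t ∈ timeInt T, HasDerivWithinAt
      (fun s => ∫ x in (0 : ℝ)..(2 * Real.pi), (v s x - vxx s x) ^ 2)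
      (-3 * β t * ∫ x in (0 : ℝ)..(2 * Real.pi), (v t x - vxx t x) ^ 2 * vx t x)
      (timeInt T) t := fun t ht => by
    rw [← intervalIntegral_two_mul_momentum_mul_time_deriv_eq (hper t ht) (hvx t ht)
      (hvxx t ht) (hvxxx t ht) (hslice vxxx (by simp) t ht) (hPDE t ht)]
    refine hasDerivWithinAt_intervalIntegral_timeInt (f := fun s x => (v s x - vxx s x) ^ 2)
      (f' := fun s x => 2 * (v s x - vxx s x) * (vt s x - vtxx s x))
      (((hcont v (by simp)).sub (hcont vxx (by simp))).pow 2)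
      ((continuousOn_const.mul ((hcont v (by simp)).sub (hcont vxx (by simp)))).mul
        ((hcont vt (by simp)).sub (hcont vtxx (by simp))))
      (fun x s hs => (((hvt x s hs).sub (hvtxx x s hs)).pow 2).congr_deriv (by simp)) hT ht
  refine ⟨henergy, fun K _ hbound t ht => ?_⟩
  have hgrowth : ∀ s ∈ timeInt T,
      -3 * β s * ∫ x in (0 : ℝ)..(2 * Real.pi), (v s x - vxx s x) ^ 2 * vx s x
        ≤ 3 * K * ∫ x in (0 : ℝ)..(2 * Real.pi), (v s x - vxx s x) ^ 2 := fun s hs => by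
    have := neg_mul_intervalIntegral_sq_mul_le (g := fun x => v s x - vxx s x)
      (a := 0) (b := 2 * Real.pi) Real.two_pi_pos.le
      ((hslice v (by simp) s hs).sub (hslice vxx (by simp) s hs)) (hslice vx (by simp) s hs)
      (hbound s hs)
    linarith
  simpa using le_exp_mul_of_hasDerivWithinAt_le (OrdConnected.convex inferInstance) henergy
    hgrowth (zero_mem_timeInt hT) ht ht.1

/-- For smooth `2π`-periodic solutions of the rescaled Camassa–Holm equation
`v_t - v_{txx} + 3β v v_x = 2β v_x v_{xx} + β v v_{xxx}` on `[0,T) × ℝ`, with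
momentum `V = v - v_{xx}`:
(i) `d/dt ∫₀^{2π} V² dx = -3 β(t) ∫₀^{2π} V² v_x dx` on `[0,T)` (derivative
within `[0,T)`), and
(ii) if `K > 0` and `β(t) v_x(t,x) ≥ -K` everywhere, then
`∫₀^{2π} V(t)² dx ≤ e^{3Kt} ∫₀^{2π} V(0)² dx` for all `t ∈ [0,T)`.
All the partial derivatives of `v` are given as functions together with the
corresponding derivative facts and continuity (the meaning of "smooth" here). -/
theorem rescaled_CH_momentum_L2_identity_and_gronwall
    (T : EReal) (hT : 0 < T) (β : ℝ → ℝ)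
    (v vt vx vxx vxxx vtx vtxx : ℝ → ℝ → ℝ)
    (hβ : ContinuousOn β (timeInt T))
    (hper : ∀ t ∈ timeInt T, ∀ x : ℝ, v t (x + 2 * Real.pi) = v t x)
    (hvx : ∀ t ∈ timeInt T, ∀ x : ℝ, HasDerivAt (fun y => v t y) (vx t x) x)
    (hvxx : ∀ t ∈ timeInt T, ∀ x : ℝ, HasDerivAt (fun y => vx t y) (vxx t x) x)
    (hvxxx : ∀ t ∈ timeInt T, ∀ x : ℝ, HasDerivAt (fun y => vxx t y) (vxxx t x) x)
    (hvt : ∀ x : ℝ, ∀ t ∈ timeInt T,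
      HasDerivWithinAt (fun s => v s x) (vt t x) (timeInt T) t)
    (hvtx : ∀ x : ℝ, ∀ t ∈ timeInt T,
      HasDerivWithinAt (fun s => vx s x) (vtx t x) (timeInt T) t)
    (hvtxx : ∀ x : ℝ, ∀ t ∈ timeInt T,
      HasDerivWithinAt (fun s => vxx s x) (vtxx t x) (timeInt T) t)
    (hcont : ∀ f ∈ [v, vt, vx, vxx, vxxx, vtx, vtxx],
      ContinuousOn (fun p : ℝ × ℝ => f p.1 p.2) {p : ℝ × ℝ | p.1 ∈ timeInt T})
    (hPDE : ∀ t ∈ timeInt T, ∀ x : ℝ,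
      vt t x - vtxx t x + 3 * β t * v t x * vx t x
        = 2 * β t * vx t x * vxx t x + β t * v t x * vxxx t x) :
    (∀ t ∈ timeInt T,
      HasDerivWithinAt
        (fun s => ∫ x in (0 : ℝ)..(2 * Real.pi), (v s x - vxx s x) ^ 2)
        (-3 * β t * ∫ x in (0 : ℝ)..(2 * Real.pi), (v t x - vxx t x) ^ 2 * vx t x)
        (timeInt T) t) ∧
    (∀ K : ℝ, 0 < K → (∀ t ∈ timeInt T, ∀ x : ℝ, -K ≤ β t * vx t x) →
      ∀ t ∈ timeInt T,
        (∫ x in (0 : ℝ)..(2 * Real.pi), (v t x - vxx t x) ^ 2)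
          ≤ Real.exp (3 * K * t) *
              ∫ x in (0 : ℝ)..(2 * Real.pi), (v 0 x - vxx 0 x) ^ 2) :=
  rescaled_CH_momentum_L2_identity_and_gronwall_general T hT β v vt vx vxx vxxx vtx vtxx hper hvx
    hvxx hvxxx hvt hvtxx hcont hPDE
end
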